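/- arXiv:1101.0577 — 5 statements merged into one kernel-verified Lean document; each statement's English description precedes it below -/
import Mathlib

section
/- With the definitions of a_p^n, x_p, t_p, u_p, α_p as above, for all integers d ≥ a_p^n + 1 one has α_{p+1}(d-1,n) ≤ α_p(d,n). -/
def aP (n p : ℤ) : ℤ := (n - p).fdiv 2 + 1
def xP (p n d : ℤ) : ℤ := (d - aP n p).fdiv (n + p - 1)
def tP (p n d : ℤ) : ℤ := d - 1 - xP p n d * (n + p - 1)
def uP (p n d : ℤ) : ℤ := (p - n + 1 + tP p n d).fdiv 2
def alphaP (p n d : ℤ) : ℤ :=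
  xP p n d * (xP p n d - 1) * (n + p - 1) / 2 + xP p n d * (tP p n d + p) + uP p n d

/-!
Put `q = x_p(d,n)`, `q' = x_{p+1}(d-1,n)`, `r = t_p(d,n) - a_p^n + 1 ∈ [0, n+p-1)` and
`e = n - p - 2(a_p^n - 1) ∈ {0,1}`. Doubling `α` clears the exact division by two and leaves only
the parity bit of `u`, so `2α_{p+1}(d-1) ≤ D' ≤ D ≤ 2α_p(d) + 1` for the doubled expressions `D'`, `D`
without that floor, and it suffices to show `D' ≤ D`. Since `a_{p+1}^n = n - p + 1 - a_p^n`,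
`D - D' = (n+p-1) k(k-1) + q'(q'+1) + q + k(2r - e)` with `k = q - q'`, which is nonnegative
because `0 ≤ q' ≤ q`.
-/

lemma Int.mul_sub_one_self_nonneg (k : ℤ) : 0 ≤ k * (k - 1) := by
  rcases le_or_gt k 0 with h | h
  · exact mul_nonneg_of_nonpos_of_nonpos h (by linarith)
  · exact mul_nonneg h.le (by linarith)

lemma aP_bounds (n p : ℤ) : 2 * aP n p - 2 ≤ n - p ∧ n - p ≤ 2 * aP n p - 1 := by
  rw [aP, Int.fdiv_eq_ediv_of_nonneg _ zero_le_two]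
  omega

lemma aP_add_one (n p : ℤ) : aP n (p + 1) = n - p + 1 - aP n p := by
  simp only [aP, Int.fdiv_eq_ediv_of_nonneg _ zero_le_two]
  omega

/-- `2 α_p(d,n)` computed without the floor in `u_p`. -/
def alphaPDouble (p n d : ℤ) : ℤ :=
  xP p n d * (xP p n d - 1) * (n + p - 1) + 2 * (xP p n d * (tP p n d + p)) +
    (p - n + 1 + tP p n d)

lemma alphaPDouble_bounds (p n d : ℤ) :
    2 * alphaP p n d ≤ alphaPDouble p n d ∧ alphaPDouble p n d ≤ 2 * alphaP p n d + 1 := by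
  have h : (2 : ℤ) ∣ xP p n d * (xP p n d - 1) * (n + p - 1) :=
    (Int.even_mul_pred_self _).two_dvd.mul_right _
  simp only [alphaP, alphaPDouble, uP, Int.fdiv_eq_ediv_of_nonneg _ zero_le_two]
  omega

variable {p n d : ℤ}

lemma tP_bounds (hm : 0 < n + p - 1) :
    aP n p - 1 ≤ tP p n d ∧ tP p n d < aP n p + n + p - 2 := by
  have h₁ := Int.emod_nonneg (d - aP n p) hm.ne'
  have h₂ := Int.emod_lt_of_pos (d - aP n p) hm
  have h₃ := Int.mul_ediv_add_emod (d - aP n p) (n + p - 1)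
  rw [tP, xP, Int.fdiv_eq_ediv_of_nonneg _ hm.le]
  constructor <;> linarith

lemma xP_nonneg (hm : 0 < n + p - 1) (hd : aP n p ≤ d) : 0 ≤ xP p n d :=
  Int.fdiv_nonneg (by linarith) hm.le

lemma xP_add_one_sub_one_nonneg (hm : 0 < n + p - 1) (hd : aP n p + 1 ≤ d) :
    0 ≤ xP (p + 1) n (d - 1) := by
  refine xP_nonneg (by linarith) ?_
  rw [aP_add_one]
  linarith [aP_bounds n p]

lemma xP_add_one_sub_one_le (hm : 0 < n + p - 1) (hd : aP n p ≤ d) :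
    xP (p + 1) n (d - 1) ≤ xP p n d := by
  set q := xP p n d
  set q' := xP (p + 1) n (d - 1)
  have hq : 0 ≤ q := xP_nonneg hm hd
  have ht := (tP_bounds (d := d) hm).2
  have ht' := (tP_bounds (p := p + 1) (n := n) (d := d - 1) (by linarith)).1
  rw [aP_add_one] at ht'
  simp only [tP] at ht ht'
  have hq' : q' * (n + p) ≤ d - aP n p := by linarith [aP_bounds n p]
  have hlt : q' * (n + p) < (q + 1) * (n + p) := by nlinarith
  exact Int.lt_add_one_iff.1 (lt_of_mul_lt_mul_right hlt (by linarith))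

lemma alphaPDouble_add_one_sub_one_le (hm : 0 < n + p - 1) (hd : aP n p + 1 ≤ d) :
    alphaPDouble (p + 1) n (d - 1) ≤ alphaPDouble p n d := by
  set q := xP p n d
  set q' := xP (p + 1) n (d - 1)
  set r := tP p n d - (aP n p - 1) with hr_def
  set e := n - p - 2 * (aP n p - 1) with he_def
  have hq' : 0 ≤ q' := xP_add_one_sub_one_nonneg hm hd
  have hk : 0 ≤ q - q' := sub_nonneg.2 (xP_add_one_sub_one_le hm (by linarith))
  have hr : 0 ≤ r := sub_nonneg.2 (tP_bounds hm).1
  have he : e ≤ 1 := by linarith [aP_bounds n p]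
  have hdiff : alphaPDouble p n d - alphaPDouble (p + 1) n (d - 1) =
      (n + p - 1) * ((q - q') * (q - q' - 1)) + q' * (q' + 1) + q + (q - q') * (2 * r - e) := by
    simp only [alphaPDouble, tP, hr_def, he_def]
    ring
  have hk₂ := mul_nonneg hm.le (Int.mul_sub_one_self_nonneg (q - q'))
  have hkr := mul_nonneg hk (by linarith : 0 ≤ 2 * r - e + 1)
  nlinarith

theorem stmt1 (n p d : ℤ) (hn : 3 ≤ n) (hp : 0 ≤ p) (hd : aP n p + 1 ≤ d) :
    alphaP (p + 1) n (d - 1) ≤ alphaP p n d := by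
  have h₁ := (alphaPDouble_bounds (p + 1) n (d - 1)).1
  have h₂ := alphaPDouble_add_one_sub_one_le (by omega : 0 < n + p - 1) hd
  have h₃ := (alphaPDouble_bounds p n d).2
  omega
end

section
/- With the definitions of a_p^n, x_p, t_p, u_p, α_p as above, for all integers d ≥ a_p^n + n + p one has α_{p+1}(d,n) ≤ α_p(d,n). -/
/-!
Write `m = n + p - 1`. Shifting `d` by the period `m` raises `x_p` by one and leaves `t_p` alone,
so `α_p(d + m) = α_p(d) + d - 1 + p`. Since the period of `α_{p+1}` is `m + 1`, this gives
`α_{p+1}(d + m + 1) - α_p(d + m + 1) = α_{p+1}(d) - α_p(d + 1)`, and `α_p` is nondecreasing in `d`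
once `x_p ≥ 0`. The claim therefore propagates from one period of `d`, where `x_p, x_{p+1} ∈ {1, 2}`
and it is linear arithmetic.
-/

lemma aP_eq (n p : ℤ) : aP n p = (n - p) / 2 + 1 := by
  rw [aP, Int.fdiv_eq_ediv_of_nonneg _ zero_le_two]

section

variable {p n d : ℤ}

lemma xP_eq_iff (hm : 0 < n + p - 1) {x : ℤ} :
    xP p n d = x ↔ x * (n + p - 1) ≤ d - aP n p ∧ d - aP n p < x * (n + p - 1) + (n + p - 1) := by
  rw [xP, Int.fdiv_eq_ediv_of_nonneg _ hm.le, Int.ediv_eq_iff_of_pos hm]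

lemma xP_add_period (hm : 0 < n + p - 1) : xP p n (d + (n + p - 1)) = xP p n d + 1 := by
  obtain ⟨h₁, h₂⟩ := (xP_eq_iff hm).1 (rfl : xP p n d = _)
  rw [xP_eq_iff hm]
  constructor <;> linarith

lemma mul_sub_one_div_two_succ (x : ℤ) : (x + 1) * (x + 1 - 1) / 2 = x * (x - 1) / 2 + x := by
  rw [show (x + 1) * (x + 1 - 1) = x * (x - 1) + x * 2 by ring,
    Int.add_mul_ediv_right _ _ two_ne_zero]

lemma alphaP_eq {x t : ℤ} (hx : xP p n d = x) (ht : d - 1 - x * (n + p - 1) = t) :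
    alphaP p n d = x * (x - 1) / 2 * (n + p - 1) + x * (t + p) + (p - n + 1 + t) / 2 := by
  rw [alphaP, uP, tP, hx, ht, Int.fdiv_eq_ediv_of_nonneg _ zero_le_two,
    Int.mul_ediv_assoc' _ (Int.even_mul_pred_self x).two_dvd]

lemma alphaP_add_period (hm : 0 < n + p - 1) :
    alphaP p n (d + (n + p - 1)) = alphaP p n d + (d - 1 + p) := by
  obtain ⟨x, hx⟩ : ∃ x, xP p n d = x := ⟨_, rfl⟩
  have hx' : xP p n (d + (n + p - 1)) = x + 1 := hx ▸ xP_add_period hm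
  rw [alphaP_eq hx' (t := d - 1 - x * (n + p - 1)) (by ring), alphaP_eq hx rfl,
    mul_sub_one_div_two_succ]
  ring

lemma alphaP_le_alphaP_add_one (hm : 0 < n + p - 1) (hd : aP n p ≤ d) :
    alphaP p n d ≤ alphaP p n (d + 1) := by
  obtain ⟨x, hx⟩ : ∃ x, xP p n d = x := ⟨_, rfl⟩
  have hx₀ : 0 ≤ x := hx ▸ xP_nonneg hm hd
  obtain ⟨h₁, h₂⟩ := (xP_eq_iff hm).1 hx
  have ha := aP_eq n p
  by_cases hjump : d + 1 - aP n p = x * (n + p - 1) + (n + p - 1)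
  · have hx' : xP p n (d + 1) = x + 1 := (xP_eq_iff hm).2 ⟨by linarith, by linarith⟩
    rw [alphaP_eq hx (t := aP n p + n + p - 3) (by linarith),
      alphaP_eq hx' (t := aP n p - 1) (by linarith), mul_sub_one_div_two_succ]
    have hu : (p - n + 1 + (aP n p + n + p - 3)) / 2 ≤
        aP n p - 1 + p + x + (p - n + 1 + (aP n p - 1)) / 2 := by
      omega
    linarith
  · have hx' : xP p n (d + 1) = x := (xP_eq_iff hm).2 ⟨by linarith, by omega⟩
    rw [alphaP_eq hx rfl, alphaP_eq hx' rfl]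
    have hu : (p - n + 1 + (d - 1 - x * (n + p - 1))) / 2 ≤
        (p - n + 1 + (d + 1 - 1 - x * (n + p - 1))) / 2 := by omega
    linarith

lemma xP_eq_one_or_two (hm : 0 < n + p - 1) (h₁ : n + p - 1 ≤ d - aP n p)
    (h₂ : d - aP n p < 3 * (n + p - 1)) : xP p n d = 1 ∨ xP p n d = 2 := by
  by_cases h : d - aP n p < 2 * (n + p - 1)
  · exact Or.inl ((xP_eq_iff hm).2 ⟨by linarith, by linarith⟩)
  · exact Or.inr ((xP_eq_iff hm).2 ⟨by linarith, by linarith⟩)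

lemma alphaP_succ_le_alphaP_of_lt (hnp : 3 ≤ n + p) (hd₁ : aP n p + n + p ≤ d)
    (hd₂ : d < aP n p + 2 * (n + p)) : alphaP (p + 1) n d ≤ alphaP p n d := by
  have ha := aP_eq n p
  have ha' := aP_eq n (p + 1)
  have hm : 0 < n + p - 1 := by omega
  have hm' : 0 < n + (p + 1) - 1 := by omega
  have hx := (xP_eq_iff hm).1 (rfl : xP p n d = _)
  have hx' := (xP_eq_iff hm').1 (rfl : xP (p + 1) n d = _)
  rcases xP_eq_one_or_two (d := d) hm (by omega) (by omega) with h | h <;>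
  rcases xP_eq_one_or_two (d := d) hm' (by omega) (by omega) with h' | h' <;>
  · rw [h] at hx
    rw [h'] at hx'
    simp only [alphaP, tP, uP, h, h', Int.fdiv_eq_ediv_of_nonneg _ zero_le_two]
    omega

lemma alphaP_succ_le_alphaP_add_period (hm : 0 < n + p - 1) (hd : aP n p ≤ d)
    (h : alphaP (p + 1) n d ≤ alphaP p n d) :
    alphaP (p + 1) n (d + (n + p)) ≤ alphaP p n (d + (n + p)) := by
  have h₁ := alphaP_add_period (n := n) (p := p + 1) (d := d) (by omega)
  have h₂ := alphaP_add_period (d := d + 1) hm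
  have h₃ := alphaP_le_alphaP_add_one hm hd
  rw [show n + (p + 1) - 1 = n + p by ring] at h₁
  rw [show d + 1 + (n + p - 1) = d + (n + p) by ring] at h₂
  linarith

end

theorem stmt2 (n p d : ℤ) (hn : 3 ≤ n) (hp : 0 ≤ p) (hd : aP n p + n + p ≤ d) :
    alphaP (p + 1) n d ≤ alphaP p n d := by
  induction d using Int.strongRec (m := aP n p + 2 * (n + p)) with
  | lt d hlt => exact alphaP_succ_le_alphaP_of_lt (by omega) hd hlt
  | ge d hge ih =>
    have h := alphaP_succ_le_alphaP_add_period (d := d - (n + p)) (by omega) (by omega)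
      (ih (d - (n + p)) (by omega) (by omega))
    rwa [sub_add_cancel] at h
end

section
/- With the definitions of α_p as above, for all integers d, n ≥ 3, p ≥ 0, the value α_p(d+1,n+1) equals either α_{p+1}(d,n) - 1 or α_{p+1}(d,n). -/
lemma Int.fdiv_two_eq_fdiv_two_succ_sub_one_or_eq (m : ℤ) :
    m.fdiv 2 = (m + 1).fdiv 2 - 1 ∨ m.fdiv 2 = (m + 1).fdiv 2 := by
  rw [Int.fdiv_eq_ediv_of_nonneg _ (by norm_num), Int.fdiv_eq_ediv_of_nonneg _ (by norm_num)]
  omega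

lemma aP_succ_left (n p : ℤ) : aP (n + 1) p = aP n (p + 1) + 1 := by
  unfold aP
  rw [Int.fdiv_eq_ediv_of_nonneg _ (by norm_num), Int.fdiv_eq_ediv_of_nonneg _ (by norm_num)]
  omega

lemma xP_shift (p n d : ℤ) : xP p (n + 1) (d + 1) = xP (p + 1) n d := by
  unfold xP
  rw [aP_succ_left]
  congr 1 <;> ring

lemma tP_shift (p n d : ℤ) : tP p (n + 1) (d + 1) = tP (p + 1) n d + 1 := by
  unfold tP
  rw [xP_shift]
  ring

lemma uP_shift (p n d : ℤ) :
    uP p (n + 1) (d + 1) = uP (p + 1) n d - 1 ∨ uP p (n + 1) (d + 1) = uP (p + 1) n d := by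
  have hu : uP (p + 1) n d = (p - (n + 1) + 1 + tP p (n + 1) (d + 1) + 1).fdiv 2 := by
    rw [uP, tP_shift]
    ring_nf
  rw [hu]
  exact Int.fdiv_two_eq_fdiv_two_succ_sub_one_or_eq _

lemma alphaP_shift (p n d : ℤ) :
    alphaP p (n + 1) (d + 1) = alphaP (p + 1) n d - uP (p + 1) n d + uP p (n + 1) (d + 1) := by
  unfold alphaP
  rw [xP_shift, tP_shift, show n + 1 + p - 1 = n + (p + 1) - 1 by ring]
  ring

theorem stmt4_general (n p d : ℤ) :
    alphaP p (n + 1) (d + 1) = alphaP (p + 1) n d - 1 ∨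
    alphaP p (n + 1) (d + 1) = alphaP (p + 1) n d := by
  rw [alphaP_shift]
  rcases uP_shift p n d with hu | hu <;> rw [hu]
  · exact Or.inl (by ring)
  · exact Or.inr (by ring)

theorem stmt4 (n p d : ℤ) (hn : 3 ≤ n) (hp : 0 ≤ p) :
    alphaP p (n + 1) (d + 1) = alphaP (p + 1) n d - 1 ∨
    alphaP p (n + 1) (d + 1) = alphaP (p + 1) n d :=
  stmt4_general n p d
end

section
/- With α_p, x_p, and F_d^{p,n} defined as above, for all integers n ≥ 3, p ≥ 0 and d ≥ a_p^n: α_p(d,n) = ⌊F_d^{p,n}(2(x_p(d,n)+1)) - 1/2⌋. -/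
def F (p n d r : ℤ) : ℚ :=
  (1/2 : ℚ) * ((d : ℚ) * (r - 1) + ((p : ℚ) - 1) * r - (((n : ℚ) + p - 1)/4) * r^2) + 1

/-!
Writing `k = n + p - 1` and `t = d - 1 - x k`, the number `2 F(2(x+1)) - 1` is the integer
`x (x - 1) k + 2 x (t + p) + (p - n + 1 + t)`. Its first two summands are even, so the floor of
half of it is `x (x - 1) k / 2 + x (t + p) + ⌊(p - n + 1 + t) / 2⌋`, which is `α_p(d, n)` term by
term.
-/

theorem Int.two_dvd_mul_sub_one_mul (x k : ℤ) : 2 ∣ x * (x - 1) * k :=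
  Dvd.dvd.mul_right (Int.even_mul_pred_self x).two_dvd k

theorem Rat.floor_intCast_two_mul_add_div_two (a w : ℤ) :
    ⌊((2 * a + w : ℤ) : ℚ) / 2⌋ = a + w.fdiv 2 := by
  rw [show (2 : ℚ) = ((2 : ℕ) : ℚ) by norm_num, Rat.floor_intCast_div_natCast,
    Int.fdiv_eq_ediv_of_nonneg _ (by norm_num)]
  omega

theorem F_two_mul_add_one_sub_half (p n d x : ℤ) :
    F p n d (2 * (x + 1)) - 1/2 =
      ((2 * (x * (x - 1) * (n + p - 1) / 2 + x * (d - 1 - x * (n + p - 1) + p))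
        + (p - n + 1 + (d - 1 - x * (n + p - 1))) : ℤ) : ℚ) / 2 := by
  obtain ⟨c, hc⟩ := Int.two_dvd_mul_sub_one_mul x (n + p - 1)
  have hc' : (x : ℚ) * (x - 1) * (n + p - 1) = 2 * c := by exact_mod_cast hc
  rw [hc, Int.mul_ediv_cancel_left _ two_ne_zero]
  unfold F
  push_cast
  linear_combination (1/2 : ℚ) * hc'

theorem stmt7_general (n p d : ℤ) :
    alphaP p n d = ⌊F p n d (2 * (xP p n d + 1)) - 1/2⌋ := by
  rw [F_two_mul_add_one_sub_half, Rat.floor_intCast_two_mul_add_div_two]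
  rfl

theorem stmt7 (n p d : ℤ) (hn : 3 ≤ n) (hp : 0 ≤ p) (hd : aP n p ≤ d) :
    alphaP p n d = ⌊F p n d (2 * (xP p n d + 1)) - 1/2⌋ :=
  stmt7_general n p d
end

section
/- With α_p, x_p, and F_d^{p,n} defined as above, for all integers n ≥ 3, p ≥ 0 and d ≥ a_{p+1}^n + 1: α_{p+1}(d-1,n) = ⌊F_d^{p,n+1}(2(x_{p+1}(d-1,n)+1))⌋. -/
/-! Both sides are the floor of the same rational number. Unfolding the integer divisions in
`α_{p+1}` writes it as `⌊m x(x-1)/2 + x(t+p+1) + (t+p-n+2)/2⌋` with `x = x_{p+1}(d-1,n)`,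
`t = t_{p+1}(d-1,n)`, `m = n+p` (the first division is exact since `x(x-1)` is even), and
substituting `d = x m + t + 2` into `F_d^{p,n+1}(2(x+1))` gives the same quantity. -/

lemma Int.fdiv_two_eq_floor (a : ℤ) : a.fdiv 2 = ⌊(a : ℚ) / 2⌋ := by
  rw [Int.fdiv_eq_ediv_of_nonneg _ zero_le_two]
  exact_mod_cast (Rat.floor_intCast_div_natCast a 2).symm

lemma Int.cast_mul_mul_sub_one_div_two (x c : ℤ) :
    ((x * (x - 1) * c / 2 : ℤ) : ℚ) = x * (x - 1) * c / 2 := by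
  have h : (2 : ℤ) ∣ x * (x - 1) * c := (Int.even_mul_pred_self x).two_dvd.mul_right c
  rw [Int.cast_div h (by norm_num)]
  push_cast
  ring

lemma eq_xP_mul_add_tP (p n d : ℤ) : d = xP p n d * (n + p - 1) + tP p n d + 1 := by
  unfold tP; ring

lemma alphaP_eq_floor (p n d : ℤ) :
    alphaP p n d = ⌊((n + p - 1) * xP p n d * (xP p n d - 1) / 2 + xP p n d * (tP p n d + p)
      + (p - n + 1 + tP p n d) / 2 : ℚ)⌋ := by
  rw [alphaP, uP, Int.fdiv_two_eq_floor, ← Int.floor_intCast_add]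
  push_cast [Int.cast_mul_mul_sub_one_div_two]
  congr 1
  ring

theorem stmt8_general (n p d : ℤ) :
    alphaP (p + 1) n (d - 1) = ⌊F p (n + 1) d (2 * (xP (p + 1) n (d - 1) + 1))⌋ := by
  rw [alphaP_eq_floor]
  congr 1
  have hd := congrArg (Int.cast : ℤ → ℚ) (eq_xP_mul_add_tP (p + 1) n (d - 1))
  push_cast at hd
  unfold F
  push_cast
  linear_combination (-(2 * (xP (p + 1) n (d - 1) : ℚ) + 1) / 2) * hd

theorem stmt8 (n p d : ℤ) (hn : 3 ≤ n) (hp : 0 ≤ p) (hd : aP n (p + 1) + 1 ≤ d) :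
    alphaP (p + 1) n (d - 1) = ⌊F p (n + 1) d (2 * (xP (p + 1) n (d - 1) + 1))⌋ :=
  stmt8_general n p d
end
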